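/- arXiv:2004.04563 — 2 statements merged into one kernel-verified Lean document; each statement's English description precedes it below -/
import Mathlib

section
/- Let W be a symmetric positive definite n×n matrix, Z an n×m matrix, and V an n×(n+m) matrix. Then the (n+m)×(n+m) block matrix [[W, Z],[Z^T, Z^T W⁻¹ Z]] satisfies [[W, Z],[Z^T, Z^T W⁻¹ Z]] ⪰ [W; Z^T] V + V^T [W; Z^T]^T - V^T W V, where [W; Z^T] denotes the (n+m)×n matrix obtained by stacking W on top of Z^T. -/
/-! Completing the square: with `A = [W; Zᵀ]`, the block matrix is `A W⁻¹ Aᵀ`, and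
`A W⁻¹ Aᵀ - (A V + Vᵀ Aᵀ - Vᵀ W V) = (A W⁻¹ - Vᵀ) W (A W⁻¹ - Vᵀ)ᵀ`, which is positive
semidefinite because `W` is. -/

open Matrix

namespace Matrix

variable {ι n R : Type*} [Fintype n] [DecidableEq n] [CommRing R] [StarRing R]

lemma mul_inv_mul_conjTranspose_sub_eq {W : Matrix n n R} (hWh : W.IsHermitian) (hWu : IsUnit W)
    (A : Matrix ι n R) (V : Matrix n ι R) :
    A * W⁻¹ * Aᴴ - (A * V + Vᴴ * Aᴴ - Vᴴ * W * V) = (A * W⁻¹ - Vᴴ) * W * (A * W⁻¹ - Vᴴ)ᴴ := by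
  have hdet : IsUnit W.det := (isUnit_iff_isUnit_det W).mp hWu
  simp only [conjTranspose_sub, conjTranspose_mul, conjTranspose_conjTranspose, hWh.inv.eq,
    Matrix.sub_mul, Matrix.mul_sub, Matrix.mul_assoc, nonsing_inv_mul_cancel_left W _ hdet,
    mul_nonsing_inv_cancel_left W _ hdet]
  abel

lemma fromRows_mul_inv_mul_conjTranspose_fromRows {m : Type*} {W : Matrix n n R}
    (hWh : W.IsHermitian) (hWu : IsUnit W) (Z : Matrix n m R) :
    fromRows W Zᴴ * W⁻¹ * (fromRows W Zᴴ)ᴴ = fromBlocks W Z Zᴴ (Zᴴ * W⁻¹ * Z) := by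
  have hdet : IsUnit W.det := (isUnit_iff_isUnit_det W).mp hWu
  rw [conjTranspose_fromRows_eq_fromCols_conjTranspose, conjTranspose_conjTranspose, hWh.eq,
    fromRows_mul, fromRows_mul_fromCols, mul_nonsing_inv W hdet, Matrix.one_mul,
    Matrix.one_mul, Matrix.mul_assoc, nonsing_inv_mul W hdet, Matrix.mul_one]

variable [Fintype ι] [PartialOrder R]

theorem PosSemidef.mul_inv_mul_conjTranspose_sub {W : Matrix n n R} (hW : W.PosSemidef)
    (hWu : IsUnit W) (A : Matrix ι n R) (V : Matrix n ι R) :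
    (A * W⁻¹ * Aᴴ - (A * V + Vᴴ * Aᴴ - Vᴴ * W * V)).PosSemidef := by
  rw [mul_inv_mul_conjTranspose_sub_eq hW.isHermitian hWu]
  exact hW.mul_mul_conjTranspose_same _

end Matrix

theorem affine_lower_bound (n m : ℕ)
    (W : Matrix (Fin n) (Fin n) ℝ) (hW : W.PosDef)
    (Z : Matrix (Fin n) (Fin m) ℝ)
    (V : Matrix (Fin n) (Fin n ⊕ Fin m) ℝ) :
    (Matrix.fromBlocks W Z Zᵀ (Zᵀ * W⁻¹ * Z)
      - ((Matrix.fromRows W Zᵀ) * V + Vᵀ * (Matrix.fromRows W Zᵀ)ᵀ - Vᵀ * W * V)).PosSemidef := by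
  have h := hW.posSemidef.mul_inv_mul_conjTranspose_sub hW.isUnit (fromRows W Zᵀ) V
  simp only [← conjTranspose_eq_transpose_of_trivial] at h ⊢
  rwa [fromRows_mul_inv_mul_conjTranspose_fromRows hW.isHermitian hW.isUnit] at h
end

section
/- Suppose symmetric positive definite matrices D̄_T, D_s, D₀ and ε > 0 satisfy the block positive definiteness condition [[ε D₀ - (1+ε) D_s, ε D₀],[ε D₀, D̄_T + ε D₀]] ≻ 0. If Δ₀^T Δ₀ ⪯ D₀⁻¹ and Δᵤ^T Δᵤ ⪯ D̄_T⁻¹, then Δ_s := -(Δ₀ + Δᵤ) satisfies Δ_s^T Δ_s ≺ D_s⁻¹. -/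
/-!
The Schur complement of the lower-right block and the Woodbury identity turn the block condition
into `(1 + ε) D_s ≺ (ε⁻¹ D₀⁻¹ + D̄_T⁻¹)⁻¹`. Inversion is antitone on positive definite matrices, so
`(1 + 1/ε) D₀⁻¹ + (1 + ε) D̄_T⁻¹ ≺ D_s⁻¹`, and by Young's inequality
`(X + Y)ᵀ(X + Y) ⪯ (1 + 1/ε) XᵀX + (1 + ε) YᵀY` the left-hand side dominates `Δ_sᵀ Δ_s`.
-/

open Matrix
open scoped ComplexOrder

namespace Matrix

theorem inv_add_inv_inv {n α : Type*} [Fintype n] [DecidableEq n] [CommRing α]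
    {A B : Matrix n n α} (hA : IsUnit A) (hB : IsUnit B) (hBA : IsUnit (B + A)) :
    (A⁻¹ + B⁻¹)⁻¹ = A - A * (B + A)⁻¹ * A := by
  have hAA := nonsing_inv_nonsing_inv A ((isUnit_iff_isUnit_det A).1 hA)
  have hBB := nonsing_inv_nonsing_inv B ((isUnit_iff_isUnit_det B).1 hB)
  simpa [hAA, hBB] using add_mul_mul_inv_eq_sub A⁻¹ 1 B⁻¹ 1 (isUnit_nonsing_inv_iff.2 hA)
    (isUnit_nonsing_inv_iff.2 hB) (by simpa [hAA, hBB])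

variable {m n 𝕜 : Type*} [Fintype m] [Fintype n] [RCLike 𝕜]

theorem posSemidef_young {X Y : Matrix m n 𝕜} {P Q : Matrix n n 𝕜}
    (hX : (P - Xᴴ * X).PosSemidef) (hY : (Q - Yᴴ * Y).PosSemidef) {ε : ℝ} (hε : 0 < ε) :
    ((1 + ε⁻¹) • P + (1 + ε) • Q - (X + Y)ᴴ * (X + Y)).PosSemidef := by
  have hcross : (ε⁻¹ • ((X - ε • Y)ᴴ * (X - ε • Y))).PosSemidef :=
    (posSemidef_conjTranspose_mul_self _).smul (inv_nonneg.2 hε.le)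
  have hsplit : (1 + ε⁻¹) • P + (1 + ε) • Q - (X + Y)ᴴ * (X + Y) =
      (1 + ε⁻¹) • (P - Xᴴ * X) + (1 + ε) • (Q - Yᴴ * Y) +
        ε⁻¹ • ((X - ε • Y)ᴴ * (X - ε • Y)) := by
    simp only [conjTranspose_add, conjTranspose_sub, conjTranspose_smul, star_trivial,
      Matrix.add_mul, Matrix.mul_add, Matrix.sub_mul, Matrix.mul_sub, Matrix.smul_mul,
      Matrix.mul_smul, smul_sub, smul_smul]
    match_scalars <;> field_simp <;> ring
  rw [hsplit]
  exact ((hX.smul (by positivity)).add (hY.smul (by positivity))).add hcross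

variable [DecidableEq m] [DecidableEq n]

theorem PosDef.posDef_fromBlocks₁₁_iff {A : Matrix m m 𝕜} (B : Matrix m n 𝕜) (D : Matrix n n 𝕜)
    (hA : A.PosDef) : (fromBlocks A B Bᴴ D).PosDef ↔ (D - Bᴴ * A⁻¹ * B).PosDef := by
  let := hA.isUnit.invertible
  have hdet := det_fromBlocks₁₁ A B Bᴴ D
  rw [invOf_eq_nonsing_inv] at hdet
  refine ⟨fun h => ?_, fun h => ?_⟩
  · refine ((hA.fromBlocks₁₁ B D).1 h.posSemidef).posDef_iff_det_ne_zero.2 ?_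
    exact right_ne_zero_of_mul (hdet ▸ h.det_pos.ne')
  · refine ((hA.fromBlocks₁₁ B D).2 h.posSemidef).posDef_iff_det_ne_zero.2 ?_
    exact hdet ▸ mul_ne_zero hA.det_pos.ne' h.det_pos.ne'

theorem PosDef.posDef_fromBlocks₂₂_iff (A : Matrix m m 𝕜) (B : Matrix m n 𝕜) {D : Matrix n n 𝕜}
    (hD : D.PosDef) : (fromBlocks A B Bᴴ D).PosDef ↔ (A - B * D⁻¹ * Bᴴ).PosDef := by
  let := hD.isUnit.invertible
  have hdet := det_fromBlocks₂₂ A B Bᴴ D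
  rw [invOf_eq_nonsing_inv] at hdet
  refine ⟨fun h => ?_, fun h => ?_⟩
  · refine ((hD.fromBlocks₂₂ A B).1 h.posSemidef).posDef_iff_det_ne_zero.2 ?_
    exact right_ne_zero_of_mul (hdet ▸ h.det_pos.ne')
  · refine ((hD.fromBlocks₂₂ A B).2 h.posSemidef).posDef_iff_det_ne_zero.2 ?_
    exact hdet ▸ mul_ne_zero hD.det_pos.ne' h.det_pos.ne'

/-- The two Schur complements of `[[B, 1], [1, A⁻¹]]` are `B - A` and `A⁻¹ - B⁻¹`. -/
theorem PosDef.inv_sub_inv {A B : Matrix n n 𝕜} (hA : A.PosDef) (hBA : (B - A).PosDef) :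
    (A⁻¹ - B⁻¹).PosDef := by
  have hB : B.PosDef := by simpa using hA.add hBA
  have hblock : (fromBlocks B 1 1 A⁻¹).PosDef := by
    simpa using (posDef_fromBlocks₂₂_iff B 1 hA.inv).2
      (by simpa [nonsing_inv_nonsing_inv A hA.det_pos.ne'.isUnit] using hBA)
  simpa using (hB.posDef_fromBlocks₁₁_iff 1 A⁻¹).1 (by simpa using hblock)

theorem posDef_inv_sub_inv_add_inv_of_fromBlocks {P T S : Matrix n n 𝕜}
    (hP : P.PosDef) (hT : T.PosDef) (hS : S.PosDef)
    (h : (fromBlocks (P - S) P P (T + P)).PosDef) : (S⁻¹ - (P⁻¹ + T⁻¹)).PosDef := by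
  have hschur : (P - S - P * (T + P)⁻¹ * P).PosDef := by
    simpa [hP.1.eq] using
      (PosDef.posDef_fromBlocks₂₂_iff (P - S) P (hT.add hP)).1 (by rwa [hP.1.eq])
  have hN : (P⁻¹ + T⁻¹).PosDef := hP.inv.add hT.inv
  have hgap : ((P⁻¹ + T⁻¹)⁻¹ - S).PosDef := by
    rw [inv_add_inv_inv hP.isUnit hT.isUnit (hT.add hP).isUnit]
    convert hschur using 1
    abel
  simpa [nonsing_inv_nonsing_inv _ hN.det_pos.ne'.isUnit] using hS.inv_sub_inv hgap

end Matrix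

theorem core_part_II (p q : ℕ)
    (D₀ DTbar Ds : Matrix (Fin q) (Fin q) ℝ)
    (hD₀ : D₀.PosDef) (hDTbar : DTbar.PosDef) (hDs : Ds.PosDef)
    (ε : ℝ) (hε : 0 < ε)
    (hblock : (Matrix.fromBlocks (ε • D₀ - (1 + ε) • Ds) (ε • D₀)
                (ε • D₀) (DTbar + ε • D₀)).PosDef)
    (Δ₀ Δu : Matrix (Fin p) (Fin q) ℝ)
    (h₀ : (D₀⁻¹ - Δ₀ᵀ * Δ₀).PosSemidef)
    (hu : (DTbar⁻¹ - Δuᵀ * Δu).PosSemidef) :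
    (Ds⁻¹ - (-(Δ₀ + Δu))ᵀ * (-(Δ₀ + Δu))).PosDef := by
  have hε₁ : 0 < 1 + ε := by positivity
  have hgap :=
    posDef_inv_sub_inv_add_inv_of_fromBlocks (hD₀.smul hε) hDTbar (hDs.smul hε₁) hblock
  have hyoung := posSemidef_young (X := Δ₀) (Y := Δu) (by simpa using h₀) (by simpa using hu) hε
  have hsplit : Ds⁻¹ - (-(Δ₀ + Δu))ᵀ * (-(Δ₀ + Δu)) =
      (1 + ε) • (((1 + ε) • Ds)⁻¹ - ((ε • D₀)⁻¹ + DTbar⁻¹)) +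
        ((1 + ε⁻¹) • D₀⁻¹ + (1 + ε) • DTbar⁻¹ - (Δ₀ + Δu)ᴴ * (Δ₀ + Δu)) := by
    have hsDs := inv_smul' Ds (Units.mk0 _ hε₁.ne') hDs.det_pos.ne'.isUnit
    have hsD₀ := inv_smul' D₀ (Units.mk0 _ hε.ne') hD₀.det_pos.ne'.isUnit
    simp only [Units.smul_def, Units.val_inv_eq_inv_val, Units.val_mk0] at hsDs hsD₀
    rw [hsDs, hsD₀, conjTranspose_eq_transpose_of_trivial, transpose_neg, Matrix.neg_mul,
      Matrix.mul_neg, neg_neg]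
    simp only [smul_sub, smul_add, smul_smul]
    match_scalars <;> field_simp <;> ring
  rw [hsplit]
  exact (hgap.smul hε₁).add_posSemidef hyoung
end
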